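/- arXiv:2006.01420 — 2 statements merged into one kernel-verified Lean document; each statement's English description precedes it below -/
import Mathlib

section
/- Under (A1) and (A2), for every fixed i ∈ S and φ ∈ B_W(S), the map (μ,ν) ↦ r̃(i,μ,ν) + ∑_{j∈S} q̃(j|i,μ,ν) φ(j) is continuous on P(U) × P(V) with the product of the weak convergence topologies. -/
open MeasureTheory Filter Topology

noncomputable section

variable {U V : Type}

/-- Integrated reward rate `r̃(i,μ,ν)`. -/
def rT [MeasurableSpace U] [MeasurableSpace V] (r : ℕ → U → V → ℝ) (i : ℕ)
    (μ : ProbabilityMeasure U) (ν : ProbabilityMeasure V) : ℝ :=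
  ∫ b, (∫ a, r i a b ∂(μ : Measure U)) ∂(ν : Measure V)

/-- Integrated transition rate `q̃(j|i,μ,ν)`. -/
def qT [MeasurableSpace U] [MeasurableSpace V] (q : ℕ → ℕ → U → V → ℝ) (i j : ℕ)
    (μ : ProbabilityMeasure U) (ν : ProbabilityMeasure V) : ℝ :=
  ∫ b, (∫ a, q i j a b ∂(μ : Measure U)) ∂(ν : Measure V)

/-- `p̃(j|i,μ,ν) = q̃(j|i,μ,ν)/(q(i)+1) + δ_{ij}`. -/
def pT [MeasurableSpace U] [MeasurableSpace V] (q : ℕ → ℕ → U → V → ℝ) (qb : ℕ → ℝ)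
    (i j : ℕ) (μ : ProbabilityMeasure U) (ν : ProbabilityMeasure V) : ℝ :=
  qT q i j μ ν / (qb i + 1) + (if i = j then (1 : ℝ) else 0)

/-- `H_α(i,φ)`. -/
def Hop [MeasurableSpace U] [MeasurableSpace V] (q : ℕ → ℕ → U → V → ℝ)
    (r : ℕ → U → V → ℝ) (φ : ℕ → ℝ) (i : ℕ) : ℝ :=
  ⨅ μ : ProbabilityMeasure U, ⨆ ν : ProbabilityMeasure V,
    (rT r i μ ν + ∑' j, qT q i j μ ν * φ j)

/-- `I_α(i,φ)`. -/
def Iop [MeasurableSpace U] [MeasurableSpace V] (q : ℕ → ℕ → U → V → ℝ)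
    (r : ℕ → U → V → ℝ) (qb : ℕ → ℝ) (α : ℝ) (φ : ℕ → ℝ) (i : ℕ) : ℝ :=
  ⨅ μ : ProbabilityMeasure U, ⨆ ν : ProbabilityMeasure V,
    (rT r i μ ν / (α + qb i + 1) +
      ((qb i + 1) / (α + qb i + 1)) * ∑' j, pT q qb i j μ ν * φ j)

/-- The operator `T`. -/
def Tmap [MeasurableSpace U] [MeasurableSpace V] (q : ℕ → ℕ → U → V → ℝ)
    (r : ℕ → U → V → ℝ) (qb : ℕ → ℝ) (α : ℝ) (ψ₁ ψ₂ : ℕ → ℝ)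
    (φ : ℕ → ℝ) (i : ℕ) : ℝ :=
  min (max (Iop q r qb α φ i) (ψ₂ i)) (ψ₁ i)

/-- The space `B_W(S)` of nonnegative functions with finite weighted sup-norm. -/
def BW (W : ℕ → ℝ) : Set (ℕ → ℝ) :=
  {f | (∀ i, 0 ≤ f i) ∧ BddAbove (Set.range fun i => f i / W i)}

/-- The weighted sup-norm `‖f‖_W`. -/
def normW (W : ℕ → ℝ) (f : ℕ → ℝ) : ℝ := ⨆ i, f i / W i

/-- Basic properties of the transition rates: nonnegativity off the diagonal,
conservativeness and stability (`qb i` is the least upper bound `q(i)`). -/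
structure RateHyps (q : ℕ → ℕ → U → V → ℝ) (qb : ℕ → ℝ) : Prop where
  off_nonneg : ∀ i j a b, j ≠ i → 0 ≤ q i j a b
  summable : ∀ i a b, Summable fun j => q i j a b
  conservative : ∀ i a b, ∑' j, q i j a b = 0
  stable : ∀ i, IsLUB (Set.range fun ab : U × V =>
    ∑' j, if j = i then (0 : ℝ) else q i j ab.1 ab.2) (qb i)

/-- Assumption (A1) (with `w 0, …, w (N-1)` playing the role of `w_1, …, w_N`,
and `W = w_1 + ⋯ + w_N`). -/
structure A1Hyps (q : ℕ → ℕ → U → V → ℝ) (qb : ℕ → ℝ) (N : ℕ) (w : ℕ → ℕ → ℝ)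
    (c : ℝ) (W : ℕ → ℝ) : Prop where
  N_pos : 0 < N
  c_pos : 0 < c
  w_nonneg : ∀ n i, 0 ≤ w n i
  w_summable : ∀ n, n < N → ∀ i a b, Summable fun j => q i j a b * w n j
  w_rec : ∀ n, n + 1 < N → ∀ i a b, ∑' j, q i j a b * w n j ≤ w (n + 1) i
  w_last : ∀ i a b, ∑' j, q i j a b * w (N - 1) j ≤ 0
  qb_le : ∀ i, qb i ≤ c * W i
  W_def : ∀ i, W i = ∑ n ∈ Finset.range N, w n i
  W_pos : ∀ i, 0 < W i

/-- Assumption (A2), parts (ii)-(iv) concerning `r` and `q`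
(compactness of `U` and `V` is imposed through instance arguments). -/
structure A2Hyps [TopologicalSpace U] [TopologicalSpace V] (q : ℕ → ℕ → U → V → ℝ)
    (r : ℕ → U → V → ℝ) (W : ℕ → ℝ) (M : ℝ) : Prop where
  r_nonneg : ∀ i a b, 0 ≤ r i a b
  r_cont : ∀ i, Continuous fun ab : U × V => r i ab.1 ab.2
  q_cont : ∀ i j, Continuous fun ab : U × V => q i j ab.1 ab.2
  qW_cont : ∀ i, Continuous fun ab : U × V => ∑' j, q i j ab.1 ab.2 * W j
  r_le : ∀ i a b, r i a b ≤ M * W i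

/-- Assumption (A2), part (iv) concerning the stopped pay-off functions. -/
structure PsiHyps (ψ₁ ψ₂ : ℕ → ℝ) (W : ℕ → ℝ) (M : ℝ) : Prop where
  ψ₂_nonneg : ∀ i, 0 ≤ ψ₂ i
  ψ₁_le : ∀ i, ψ₁ i ≤ M * W i
  ψ₂_lt_ψ₁ : ∀ i, ψ₂ i < ψ₁ i

end

/-! Off the diagonal the terms `q(j|i,·,·) φ(j)` are nonnegative and bounded by
`‖φ‖_W q(j|i,·,·) W(j)`, whose sum is continuous by (A2). A series of continuous functions with
such a continuous majorant has a continuous sum and may be integrated term by term (dominated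
convergence). Hence the map is `(μ, ν) ↦ ∫ (r(i,·,·) + ∑_j q(j|i,·,·) φ(j)) d(μ ⊗ ν)`, the
integral of a continuous function on the compact space `U × V` against the product measure, which
depends continuously on `(μ, ν)`. -/

section SeriesOfContinuousFunctions

variable {ι X : Type*} [TopologicalSpace X]

theorem lowerSemicontinuous_tsum_of_nonneg {f : ι → X → ℝ}
    (hf : ∀ j, LowerSemicontinuous (f j)) (hf0 : ∀ j x, 0 ≤ f j x)
    (hfs : ∀ x, Summable fun j => f j x) :
    LowerSemicontinuous fun x => ∑' j, f j x := by
  have hlub : ∀ x, IsLUB (Set.range fun s : Finset ι => ∑ j ∈ s, f j x) (∑' j, f j x) :=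
    fun x => isLUB_hasSum (fun j => hf0 j x) (hfs x).hasSum
  simp_rw [← fun x => (hlub x).ciSup_eq]
  exact lowerSemicontinuous_ciSup (fun x => (hlub x).bddAbove)
    fun s => lowerSemicontinuous_sum fun j _ => hf j

def HasContinuousMajorant (f : ι → X → ℝ) : Prop :=
  ∃ g : ι → X → ℝ, (∀ j, Continuous (g j)) ∧ (∀ j x, |f j x| ≤ g j x) ∧
    (∀ x, Summable fun j => g j x) ∧ Continuous fun x => ∑' j, g j x

namespace HasContinuousMajorant

/-- `∑ (g + f)` and `∑ (g - f)` have nonnegative continuous terms, hence are lower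
semicontinuous; comparing them with the continuous `∑ g` makes `∑ f` upper semicontinuous too. -/
theorem continuous_tsum {f : ι → X → ℝ} (hmaj : HasContinuousMajorant f)
    (hf : ∀ j, Continuous (f j)) : Continuous fun x => ∑' j, f j x := by
  obtain ⟨g, hg, hfg, hgs, hgc⟩ := hmaj
  have hfs : ∀ x, Summable fun j => f j x :=
    fun x => (hgs x).of_norm_bounded fun j => hfg j x
  have lsc_add : LowerSemicontinuous fun x => ∑' j, (g j x + f j x) :=
    lowerSemicontinuous_tsum_of_nonneg (fun j => ((hg j).add (hf j)).lowerSemicontinuous)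
      (fun j x => by linarith [neg_abs_le (f j x), hfg j x]) fun x => (hgs x).add (hfs x)
  have lsc_sub : LowerSemicontinuous fun x => ∑' j, (g j x - f j x) :=
    lowerSemicontinuous_tsum_of_nonneg (fun j => ((hg j).sub (hf j)).lowerSemicontinuous)
      (fun j x => by linarith [le_abs_self (f j x), hfg j x]) fun x => (hgs x).sub (hfs x)
  have eq_add : (fun x => ∑' j, f j x) = fun x => ∑' j, (g j x + f j x) + -∑' j, g j x :=
    funext fun x => by rw [(hgs x).tsum_add (hfs x)]; ring
  have eq_sub : (fun x => ∑' j, f j x) = fun x => ∑' j, g j x + -∑' j, (g j x - f j x) :=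
    funext fun x => by rw [(hgs x).tsum_sub (hfs x)]; ring
  refine continuous_iff_lower_upperSemicontinuous.2 ⟨?_, ?_⟩
  · rw [eq_add]
    exact lsc_add.add hgc.neg.lowerSemicontinuous
  · rw [eq_sub]
    exact hgc.upperSemicontinuous.add
      (continuous_neg.comp_lowerSemicontinuous_antitone lsc_sub fun _ _ => neg_le_neg)

theorem integral_tsum [Countable ι] [CompactSpace X] [MeasurableSpace X]
    [OpensMeasurableSpace X] {f : ι → X → ℝ} (hmaj : HasContinuousMajorant f)
    (hf : ∀ j, Continuous (f j)) (μ : Measure X) [IsFiniteMeasure μ] :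
    ∫ x, ∑' j, f j x ∂μ = ∑' j, ∫ x, f j x ∂μ := by
  obtain ⟨g, -, hfg, hgs, hgc⟩ := hmaj
  exact (hasSum_integral_of_dominated_convergence g (fun j => (hf j).aestronglyMeasurable)
    (fun j => .of_forall (hfg j)) (.of_forall hgs)
    (hgc.integrable_of_hasCompactSupport (.of_compactSpace _))
    (.of_forall fun x => ((hgs x).of_norm_bounded fun j => hfg j x).hasSum)).tsum_eq.symm

end HasContinuousMajorant

end SeriesOfContinuousFunctions

theorem hasSum_abs_mul_of_nonneg_of_ne {ι : Type*} [DecidableEq ι] {a w : ι → ℝ} {i : ι}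
    (ha : ∀ j, j ≠ i → 0 ≤ a j) (hs : Summable fun j => a j * w j) :
    HasSum (fun j => |a j| * w j) (∑' j, a j * w j + (|a i| - a i) * w i) := by
  convert hs.hasSum.add (hasSum_ite_eq i ((|a i| - a i) * w i)) using 1
  funext j
  by_cases hj : j = i
  · subst hj; simp only [ite_true]; ring
  · simp [hj, abs_of_nonneg (ha j hj)]

section RateSeries

variable {U V : Type} {q : ℕ → ℕ → U → V → ℝ}

theorem A1Hyps.summable_mul_W {qb : ℕ → ℝ} {N : ℕ} {w : ℕ → ℕ → ℝ} {c : ℝ} {W : ℕ → ℝ}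
    (hA1 : A1Hyps q qb N w c W) (i : ℕ) (a : U) (b : V) :
    Summable fun j => q i j a b * W j := by
  simp_rw [hA1.W_def, Finset.mul_sum]
  exact summable_sum fun n hn => hA1.w_summable n (Finset.mem_range.mp hn) i a b

variable {r : ℕ → U → V → ℝ} {W : ℕ → ℝ} {M : ℝ}

theorem hasContinuousMajorant_rate_mul [TopologicalSpace U] [TopologicalSpace V] {qb : ℕ → ℝ}
    {N : ℕ} {w : ℕ → ℕ → ℝ} {c : ℝ}
    (hrate : RateHyps q qb) (hA1 : A1Hyps q qb N w c W) (hA2 : A2Hyps q r W M)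
    {φ : ℕ → ℝ} (hφ : φ ∈ BW W) (i : ℕ) :
    HasContinuousMajorant fun j (z : U × V) => q i j z.1 z.2 * φ j := by
  obtain ⟨hφ0, hφbdd⟩ := hφ
  obtain ⟨K, hφle⟩ : ∃ K, ∀ j, φ j ≤ K * W j :=
    ⟨_, fun j => (div_le_iff₀ (hA1.W_pos j)).1 (le_ciSup hφbdd j)⟩
  have hg : ∀ z : U × V, HasSum (fun j => K * (|q i j z.1 z.2| * W j))
      (K * (∑' j, q i j z.1 z.2 * W j + (|q i i z.1 z.2| - q i i z.1 z.2) * W i)) := fun z =>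
    (hasSum_abs_mul_of_nonneg_of_ne (fun j hj => hrate.off_nonneg i j _ _ hj)
      (hA1.summable_mul_W i z.1 z.2)).mul_left K
  refine ⟨fun j z => K * (|q i j z.1 z.2| * W j),
    fun j => continuous_const.mul ((hA2.q_cont i j).abs.mul continuous_const),
    fun j z => ?_, fun z => (hg z).summable, ?_⟩
  · rw [abs_mul, abs_of_nonneg (hφ0 j)]
    calc |q i j z.1 z.2| * φ j ≤ |q i j z.1 z.2| * (K * W j) :=
          mul_le_mul_of_nonneg_left (hφle j) (abs_nonneg _)
      _ = K * (|q i j z.1 z.2| * W j) := by ring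
  · simp_rw [fun z => (hg z).tsum_eq]
    exact continuous_const.mul ((hA2.qW_cont i).add
      (((hA2.q_cont i i).abs.sub (hA2.q_cont i i)).mul continuous_const))

theorem rT_add_tsum_qT_mul_eq_integral_prod [MetricSpace U] [CompactSpace U]
    [MeasurableSpace U] [BorelSpace U] [MetricSpace V] [CompactSpace V] [MeasurableSpace V]
    [BorelSpace V] (hA2 : A2Hyps q r W M) {φ : ℕ → ℝ} {i : ℕ}
    (hmaj : HasContinuousMajorant fun j (z : U × V) => q i j z.1 z.2 * φ j)
    (μ : ProbabilityMeasure U) (ν : ProbabilityMeasure V) :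
    rT r i μ ν + ∑' j, qT q i j μ ν * φ j
      = ∫ z : U × V, r i z.1 z.2 + ∑' j, q i j z.1 z.2 * φ j
          ∂(μ.prod ν : Measure (U × V)) := by
  have hint : ∀ {F : U × V → ℝ}, Continuous F → Integrable F (μ.prod ν) :=
    fun hF => hF.integrable_of_hasCompactSupport (.of_compactSpace _)
  have hterm : ∀ j, Continuous fun z : U × V => q i j z.1 z.2 * φ j :=
    fun j => (hA2.q_cont i j).mul continuous_const
  have hqT : ∀ j, qT q i j μ ν * φ j
      = ∫ z : U × V, q i j z.1 z.2 * φ j ∂(μ.prod ν : Measure (U × V)) := fun j => by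
    rw [integral_mul_const, ProbabilityMeasure.toMeasure_prod,
      integral_prod_symm _ (hint (hA2.q_cont i j))]
    rfl
  rw [integral_add (hint (hA2.r_cont i)) (hint (hmaj.continuous_tsum hterm)),
    hmaj.integral_tsum hterm, tsum_congr hqT, ProbabilityMeasure.toMeasure_prod,
    integral_prod_symm _ (hint (hA2.r_cont i))]
  rfl

end RateSeries

theorem stmt8_general {U V : Type} [MetricSpace U] [CompactSpace U]
    [MeasurableSpace U] [BorelSpace U]
    [MetricSpace V] [CompactSpace V]
    [MeasurableSpace V] [BorelSpace V]
    (q : ℕ → ℕ → U → V → ℝ) (r : ℕ → U → V → ℝ) (qb : ℕ → ℝ)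
    (N : ℕ) (w : ℕ → ℕ → ℝ) (c : ℝ) (W : ℕ → ℝ) (M : ℝ)
    (hrate : RateHyps q qb) (hA1 : A1Hyps q qb N w c W)
    (hA2 : A2Hyps q r W M) :
    ∀ φ ∈ BW W, ∀ i : ℕ,
      Continuous fun p : ProbabilityMeasure U × ProbabilityMeasure V =>
        rT r i p.1 p.2 + ∑' j, qT q i j p.1 p.2 * φ j := by
  rintro φ hφ i
  have hmaj := hasContinuousMajorant_rate_mul hrate hA1 hA2 hφ i
  have hG : Continuous fun z : U × V => r i z.1 z.2 + ∑' j, q i j z.1 z.2 * φ j :=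
    (hA2.r_cont i).add <| hmaj.continuous_tsum fun j => (hA2.q_cont i j).mul continuous_const
  exact ((ProbabilityMeasure.continuous_integral_continuousMap (⟨_, hG⟩ : C(U × V, ℝ))).comp
    ProbabilityMeasure.continuous_prod).congr
    fun p => (rT_add_tsum_qT_mul_eq_integral_prod hA2 hmaj p.1 p.2).symm

/-- Continuity of `(μ,ν) ↦ r̃(i,μ,ν) + ∑_j q̃(j|i,μ,ν) φ(j)` on `P(U) × P(V)`
with the topologies of weak convergence. -/
theorem stmt8 {U V : Type} [MetricSpace U] [CompactSpace U] [Nonempty U]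
    [MeasurableSpace U] [BorelSpace U]
    [MetricSpace V] [CompactSpace V] [Nonempty V]
    [MeasurableSpace V] [BorelSpace V]
    (q : ℕ → ℕ → U → V → ℝ) (r : ℕ → U → V → ℝ) (qb : ℕ → ℝ)
    (N : ℕ) (w : ℕ → ℕ → ℝ) (c : ℝ) (W : ℕ → ℝ) (M : ℝ)
    (hrate : RateHyps q qb) (hA1 : A1Hyps q qb N w c W)
    (hA2 : A2Hyps q r W M) :
    ∀ φ ∈ BW W, ∀ i : ℕ,
      Continuous fun p : ProbabilityMeasure U × ProbabilityMeasure V =>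
        rT r i p.1 p.2 + ∑' j, qT q i j p.1 p.2 * φ j :=
  stmt8_general q r qb N w c W M hrate hA1 hA2
end

section
/- Under (A1) and (A2), the pointwise limit u* of the iterates u_0 := ψ_2, u_n := T u_{n−1} satisfies u*(i) ≥ T u*(i) for all i ∈ S. -/
open MeasureTheory Filter Topology

/-!
The iterates stay in the order interval `[ψ₂, ψ₁] ⊆ [0, M W]`, hence so does `u*`, and
`u (n + 1) = T (u n)` converges to `u*`. So it suffices that `φ ↦ I_α(i, φ)` is sequentially
continuous for pointwise convergence on `{φ : |φ| ≤ B W}`: then `T u* = u*`.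

`I_α(i, φ)` depends on `φ` only through `∑ⱼ q̃(j|i,μ,ν) φ(j)`. Dini's theorem, applied to the
partial sums of the continuous function `(a, b) ↦ ∑ⱼ |q(j|i,a,b)| W(j)` on the compact space
`U × V`, makes the tails `∑_{j ≥ m} |q̃(j|i,μ,ν)| W(j)` small uniformly in `(μ, ν)`. These sums
therefore converge uniformly in `(μ, ν)`, and an inf-sup of uniformly convergent bounded payoffs
converges.
-/

section InfSup

variable {ι κ : Type*} [Nonempty ι] [Nonempty κ]

theorem iInf_iSup_le_iInf_iSup_add {F G : ι → κ → ℝ} {B t : ℝ}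
    (hF : ∀ x y, |F x y| ≤ B) (hG : ∀ x y, |G x y| ≤ B) (h : ∀ x y, F x y ≤ G x y + t) :
    ⨅ x, ⨆ y, F x y ≤ (⨅ x, ⨆ y, G x y) + t := by
  have bddAbove : ∀ H : ι → κ → ℝ, (∀ x y, |H x y| ≤ B) → ∀ x, BddAbove (Set.range (H x)) :=
    fun H hH x => ⟨B, by rintro _ ⟨y, rfl⟩; exact le_of_abs_le (hH x y)⟩
  have hFbdd : BddBelow (Set.range fun x => ⨆ y, F x y) := by
    refine ⟨-B, ?_⟩
    rintro _ ⟨x, rfl⟩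
    obtain ⟨y⟩ := ‹Nonempty κ›
    exact (neg_le_of_abs_le (hF x y)).trans (le_ciSup (bddAbove F hF x) y)
  rw [← sub_le_iff_le_add]
  refine le_ciInf fun x => sub_le_iff_le_add.2 ?_
  calc ⨅ x, ⨆ y, F x y ≤ ⨆ y, F x y := ciInf_le hFbdd x
    _ ≤ (⨆ y, G x y) + t :=
      ciSup_le fun y => (h x y).trans (add_le_add_left (le_ciSup (bddAbove G hG x) y) t)

theorem tendsto_iInf_iSup_of_tendstoUniformly {α : Type*} {l : Filter α}
    {F : α → ι × κ → ℝ} {f : ι × κ → ℝ} {B : ℝ} (hf : ∀ p, |f p| ≤ B)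
    (h : TendstoUniformly F f l) :
    Tendsto (fun n => ⨅ x, ⨆ y, F n (x, y)) l (𝓝 (⨅ x, ⨆ y, f (x, y))) := by
  rw [Metric.tendsto_nhds]
  intro ε hε
  filter_upwards [Metric.tendstoUniformly_iff.1 h (ε / 2) (half_pos hε)] with n hn
  have hclose : ∀ x y, |F n (x, y) - f (x, y)| ≤ ε / 2 := fun x y => by
    rw [← Real.dist_eq, dist_comm]; exact (hn (x, y)).le
  have hfB : ∀ x y, |f (x, y)| ≤ B + ε / 2 := fun x y => by linarith [hf (x, y)]
  have hFB : ∀ x y, |F n (x, y)| ≤ B + ε / 2 := fun x y => by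
    linarith [hf (x, y), abs_sub_abs_le_abs_sub (F n (x, y)) (f (x, y)), hclose x y]
  have hle := iInf_iSup_le_iInf_iSup_add hFB hfB (t := ε / 2) fun x y => by
    linarith [abs_le.1 (hclose x y)]
  have hge := iInf_iSup_le_iInf_iSup_add hfB hFB (t := ε / 2) fun x y => by
    linarith [abs_le.1 (hclose x y)]
  rw [Real.dist_eq, abs_sub_lt_iff]
  constructor <;> linarith

end InfSup

theorem TendstoUniformly.add_const_mul {α ι : Type*} {l : Filter ι} {F : ι → α → ℝ}
    {f : α → ℝ} (h : TendstoUniformly F f l) (g : α → ℝ) (k : ℝ) :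
    TendstoUniformly (fun n x => g x + k * F n x) (fun x => g x + k * f x) l := by
  rw [Metric.tendstoUniformly_iff] at h ⊢
  intro ε hε
  filter_upwards [h (ε / (|k| + 1)) (by positivity)] with n hn x
  rw [Real.dist_eq, add_sub_add_left_eq_sub, ← mul_sub, abs_mul]
  calc |k| * |f x - F n x| ≤ |k| * (ε / (|k| + 1)) := by
        gcongr; rw [← Real.dist_eq]; exact (hn x).le
    _ < ε := by
        rw [mul_div_assoc', div_lt_iff₀ (by positivity)]
        nlinarith

theorem exists_forall_tsum_nat_add_le {X : Type*} [TopologicalSpace X] [CompactSpace X]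
    {g : ℕ → X → ℝ} (hg : ∀ j, Continuous (g j)) (hg₀ : ∀ j x, 0 ≤ g j x)
    (hsum : ∀ x, Summable fun j => g j x) (hcont : Continuous fun x => ∑' j, g j x)
    {ε : ℝ} (hε : 0 < ε) : ∃ m, ∀ x, ∑' j, g (j + m) x ≤ ε := by
  have hmono : Monotone fun m x => ∑ j ∈ Finset.range m, g j x := fun m n hmn x =>
    Finset.sum_le_sum_of_subset_of_nonneg (Finset.range_subset_range.2 hmn)
      fun j _ _ => hg₀ j x
  have hunif := hmono.tendstoUniformly_of_forall_tendsto
    (fun m => continuous_finsetSum _ fun j _ => hg j) hcont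
    fun x => (hsum x).hasSum.tendsto_sum_nat
  obtain ⟨m, hm⟩ := (Metric.tendstoUniformly_iff.1 hunif ε hε).exists
  refine ⟨m, fun x => ?_⟩
  have hsplit := (hsum x).sum_add_tsum_nat_add m
  have hdist := hm x
  rw [Real.dist_eq] at hdist
  linarith [le_abs_self (∑' j, g j x - ∑ j ∈ Finset.range m, g j x)]

section Integrals

theorem sum_abs_integral_le {X ι : Type*} [MeasurableSpace X] {π : Measure X}
    [IsProbabilityMeasure π] (s : Finset ι) {f : ι → X → ℝ} (hf : ∀ j, Integrable (f j) π)
    {C : ℝ} (hC : ∀ x, ∑ j ∈ s, |f j x| ≤ C) : ∑ j ∈ s, |∫ x, f j x ∂π| ≤ C :=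
  calc ∑ j ∈ s, |∫ x, f j x ∂π| ≤ ∑ j ∈ s, ∫ x, |f j x| ∂π :=
        Finset.sum_le_sum fun j _ => abs_integral_le_integral_abs
    _ = ∫ x, ∑ j ∈ s, |f j x| ∂π := (integral_finsetSum s fun j _ => (hf j).abs).symm
    _ ≤ ∫ _, C ∂π := integral_mono (integrable_finsetSum s fun j _ => (hf j).abs)
        (integrable_const C) hC
    _ = C := by simp

theorem summable_abs_integral_and_tsum_le {X : Type*} [MeasurableSpace X] {π : Measure X}
    [IsProbabilityMeasure π] {f : ℕ → X → ℝ} (hf : ∀ j, Integrable (f j) π) {C : ℝ}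
    (hsum : ∀ x, Summable fun j => |f j x|) (hC : ∀ x, ∑' j, |f j x| ≤ C) :
    Summable (fun j => |∫ x, f j x ∂π|) ∧ ∑' j, |∫ x, f j x ∂π| ≤ C := by
  have hpartial : ∀ L, ∑ j ∈ Finset.range L, |∫ x, f j x ∂π| ≤ C := fun L =>
    sum_abs_integral_le _ hf fun x =>
      ((hsum x).sum_le_tsum _ fun j _ => abs_nonneg _).trans (hC x)
  have hs := summable_of_sum_range_le (fun j => abs_nonneg _) hpartial
  exact ⟨hs, hs.tsum_le_of_sum_range_le hpartial⟩

theorem abs_integral_integral_le {U V : Type*} [MeasurableSpace U] [MeasurableSpace V]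
    {μ : Measure U} {ν : Measure V} [IsProbabilityMeasure μ] [IsProbabilityMeasure ν]
    {f : U → V → ℝ} {C : ℝ} (h : ∀ a b, |f a b| ≤ C) :
    |∫ b, ∫ a, f a b ∂μ ∂ν| ≤ C := by
  have hinner : ∀ b, ‖∫ a, f a b ∂μ‖ ≤ C := fun b => by
    simpa using norm_integral_le_of_norm_le_const (μ := μ) (f := fun a => f a b)
      (Eventually.of_forall fun a => (h a b : ‖f a b‖ ≤ C))
  simpa using norm_integral_le_of_norm_le_const (μ := ν) (Eventually.of_forall hinner)

theorem integral_integral_eq_integral_prod_of_continuous {U V : Type*} [MetricSpace U]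
    [CompactSpace U] [MeasurableSpace U] [BorelSpace U] [MetricSpace V] [CompactSpace V]
    [MeasurableSpace V] [BorelSpace V] (μ : Measure U) (ν : Measure V) [IsFiniteMeasure μ]
    [IsFiniteMeasure ν] {f : U → V → ℝ} (hf : Continuous fun p : U × V => f p.1 p.2) :
    ∫ b, ∫ a, f a b ∂μ ∂ν = ∫ p, f p.1 p.2 ∂μ.prod ν :=
  (integral_prod_symm _ (hf.integrable_of_hasCompactSupport (.of_compactSpace _))).symm

end Integrals

section WeightedSums

variable {κ δ W : ℕ → ℝ} {B : ℝ}

theorem summable_abs_mul_of_abs_le (hsum : Summable fun j => |κ j| * W j)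
    (hδ : ∀ j, |δ j| ≤ B * W j) : Summable fun j => |κ j * δ j| :=
  .of_nonneg_of_le (fun j => abs_nonneg _)
    (fun j => by rw [abs_mul, mul_left_comm]; exact mul_le_mul_of_nonneg_left (hδ j) (abs_nonneg _))
    (hsum.mul_left B)

theorem abs_tsum_mul_le_of_abs_le (hsum : Summable fun j => |κ j| * W j)
    (hδ : ∀ j, |δ j| ≤ B * W j) (m : ℕ) :
    |∑' j, κ j * δ j| ≤
      ∑ j ∈ Finset.range m, |κ j| * |δ j| + B * ∑' j, |κ (j + m)| * W (j + m) := by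
  have habs := summable_abs_mul_of_abs_le hsum hδ
  calc |∑' j, κ j * δ j| ≤ ∑' j, |κ j * δ j| :=
        norm_tsum_le_tsum_norm (f := fun j => κ j * δ j) habs
    _ = ∑ j ∈ Finset.range m, |κ j * δ j| + ∑' j, |κ (j + m) * δ (j + m)| :=
        (habs.sum_add_tsum_nat_add m).symm
    _ ≤ ∑ j ∈ Finset.range m, |κ j| * |δ j| + ∑' j, B * (|κ (j + m)| * W (j + m)) := by
        simp only [abs_mul]
        refine add_le_add le_rfl (Summable.tsum_le_tsum (fun j => ?_) ?_ ?_)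
        · rw [mul_left_comm]; exact mul_le_mul_of_nonneg_left (hδ _) (abs_nonneg _)
        · simpa only [abs_mul] using (summable_nat_add_iff m).2 habs
        · exact ((summable_nat_add_iff m).2 hsum).mul_left B
    _ = _ := by rw [tsum_mul_left]

end WeightedSums

theorem tendstoUniformly_tsum_mul {T : Type*} {κ : T → ℕ → ℝ} {W K : ℕ → ℝ} {B : ℝ}
    (hB : 0 ≤ B) (hK : ∀ t j, |κ t j| ≤ K j) (hsum : ∀ t, Summable fun j => |κ t j| * W j)
    (htail : ∀ ε > 0, ∃ m, ∀ t, ∑' j, |κ t (j + m)| * W (j + m) ≤ ε)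
    {φ : ℕ → ℕ → ℝ} {φ₀ : ℕ → ℝ} (hφ : ∀ n j, |φ n j| ≤ B * W j)
    (hφ₀ : ∀ j, |φ₀ j| ≤ B * W j) (hlim : ∀ j, Tendsto (fun n => φ n j) atTop (𝓝 (φ₀ j))) :
    TendstoUniformly (fun n t => ∑' j, κ t j * φ n j) (fun t => ∑' j, κ t j * φ₀ j) atTop := by
  rw [Metric.tendstoUniformly_iff]
  intro ε hε
  -- `|φ₀ - φ n| ≤ 2 B W`, so the terms beyond `m` contribute at most `ε / 2`.
  obtain ⟨m, hm⟩ := htail (ε / (4 * (B + 1))) (by positivity)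
  have hfinite : Tendsto (fun n => ∑ j ∈ Finset.range m, K j * |φ₀ j - φ n j|) atTop (𝓝 0) := by
    simpa using tendsto_finsetSum (Finset.range m) fun j _ =>
      (((tendsto_const_nhds (x := φ₀ j)).sub (hlim j)).abs.const_mul (K j))
  filter_upwards [hfinite.eventually (gt_mem_nhds (half_pos hε))] with n hn t
  have hδ : ∀ j, |φ₀ j - φ n j| ≤ (2 * B) * W j := fun j => by
    linarith [abs_sub (φ₀ j) (φ n j), hφ₀ j, hφ n j]
  have hsummable : ∀ ψ : ℕ → ℝ, (∀ j, |ψ j| ≤ B * W j) → Summable fun j => κ t j * ψ j :=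
    fun ψ hψ => (summable_abs_mul_of_abs_le (hsum t) hψ).of_abs
  rw [Real.dist_eq, ← (hsummable φ₀ hφ₀).tsum_sub (hsummable (φ n) (hφ n))]
  simp_rw [← mul_sub]
  calc |∑' j, κ t j * (φ₀ j - φ n j)|
      ≤ ∑ j ∈ Finset.range m, |κ t j| * |φ₀ j - φ n j| +
          2 * B * ∑' j, |κ t (j + m)| * W (j + m) := abs_tsum_mul_le_of_abs_le (hsum t) hδ m
    _ ≤ ∑ j ∈ Finset.range m, K j * |φ₀ j - φ n j| + 2 * B * (ε / (4 * (B + 1))) := by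
        gcongr with j
        · exact hK t j
        · exact hm t
    _ < ε := by
        have : 2 * B * (ε / (4 * (B + 1))) ≤ ε / 2 := by
          rw [show 2 * B * (ε / (4 * (B + 1))) = ε / 2 * (B / (B + 1)) by field_simp; ring]
          exact mul_le_of_le_one_right (by positivity) ((div_le_one (by positivity)).2 (by linarith))
        linarith

section Rates

variable {U V : Type} {q : ℕ → ℕ → U → V → ℝ} {qb : ℕ → ℝ} {N : ℕ} {w : ℕ → ℕ → ℝ} {c : ℝ}
  {W : ℕ → ℝ}

theorem A1Hyps.summable_q_mul_W (hA1 : A1Hyps q qb N w c W) (i : ℕ) (a : U) (b : V) :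
    Summable fun j => q i j a b * W j := by
  simp_rw [hA1.W_def, Finset.mul_sum]
  exact summable_sum fun n hn => hA1.w_summable n (Finset.mem_range.1 hn) i a b

theorem RateHyps.abs_mul_eq_add_ite (hrate : RateHyps q qb) (i : ℕ) (a : U) (b : V) (j : ℕ) :
    |q i j a b| * W j =
      q i j a b * W j + if j = i then (|q i i a b| - q i i a b) * W i else 0 := by
  split_ifs with h
  · subst h; ring
  · rw [abs_of_nonneg (hrate.off_nonneg i j a b h), add_zero]

theorem hasSum_abs_q_mul_W (hrate : RateHyps q qb) (hA1 : A1Hyps q qb N w c W) (i : ℕ)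
    (a : U) (b : V) :
    HasSum (fun j => |q i j a b| * W j)
      (∑' j, q i j a b * W j + (|q i i a b| - q i i a b) * W i) := by
  simp_rw [hrate.abs_mul_eq_add_ite (W := W) i a b]
  exact (hA1.summable_q_mul_W i a b).hasSum.add (hasSum_ite_eq i _)

theorem tsum_pT_mul [MeasurableSpace U] [MeasurableSpace V] {i : ℕ}
    {μ : ProbabilityMeasure U} {ν : ProbabilityMeasure V} {φ : ℕ → ℝ}
    (hS : Summable fun j => qT q i j μ ν * φ j) :
    ∑' j, pT q qb i j μ ν * φ j = (∑' j, qT q i j μ ν * φ j) / (qb i + 1) + φ i := by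
  have hsplit : (fun j => pT q qb i j μ ν * φ j) =
      fun j => qT q i j μ ν * φ j / (qb i + 1) + if j = i then φ i else 0 := by
    funext j
    by_cases h : j = i
    · subst h; simp only [pT, if_true]; ring
    · simp only [pT, if_neg h, if_neg (Ne.symm h)]; ring
  rw [hsplit]
  exact ((hS.hasSum.div_const _).add (hasSum_ite_eq i (φ i))).tsum_eq

theorem continuous_tsum_abs_q_mul_W [TopologicalSpace U] [TopologicalSpace V] {r : ℕ → U → V → ℝ}
    {M : ℝ} (hrate : RateHyps q qb) (hA1 : A1Hyps q qb N w c W) (hA2 : A2Hyps q r W M)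
    (i : ℕ) : Continuous fun p : U × V => ∑' j, |q i j p.1 p.2| * W j := by
  simp_rw [fun p : U × V => (hasSum_abs_q_mul_W hrate hA1 i p.1 p.2).tsum_eq]
  exact (hA2.qW_cont i).add (((hA2.q_cont i i).abs.sub (hA2.q_cont i i)).mul continuous_const)

theorem exists_forall_tsum_abs_q_mul_W_nat_add_le [TopologicalSpace U] [CompactSpace U]
    [TopologicalSpace V] [CompactSpace V] {r : ℕ → U → V → ℝ} {M : ℝ} (hrate : RateHyps q qb)
    (hA1 : A1Hyps q qb N w c W) (hA2 : A2Hyps q r W M) (i : ℕ) {ε : ℝ} (hε : 0 < ε) :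
    ∃ m, ∀ a b, ∑' j, |q i (j + m) a b| * W (j + m) ≤ ε := by
  obtain ⟨m, hm⟩ := exists_forall_tsum_nat_add_le
    (g := fun j (p : U × V) => |q i j p.1 p.2| * W j)
    (fun j => (hA2.q_cont i j).abs.mul continuous_const)
    (fun j p => mul_nonneg (abs_nonneg _) (hA1.W_pos j).le)
    (fun p => (hasSum_abs_q_mul_W hrate hA1 i p.1 p.2).summable)
    (continuous_tsum_abs_q_mul_W hrate hA1 hA2 i) hε
  exact ⟨m, fun a b => hm (a, b)⟩

end Rates

section Model

variable {U V : Type} [MetricSpace U] [CompactSpace U] [MeasurableSpace U] [BorelSpace U]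
  [MetricSpace V] [CompactSpace V] [MeasurableSpace V] [BorelSpace V]
  {q : ℕ → ℕ → U → V → ℝ} {r : ℕ → U → V → ℝ} {qb : ℕ → ℝ} {N : ℕ} {w : ℕ → ℕ → ℝ} {c : ℝ}
  {W : ℕ → ℝ} {M : ℝ}

theorem summable_abs_qT_mul_W_nat_add_and_tsum_le (hrate : RateHyps q qb)
    (hA1 : A1Hyps q qb N w c W) (hA2 : A2Hyps q r W M) {i m : ℕ} {C : ℝ}
    (hC : ∀ a b, ∑' j, |q i (j + m) a b| * W (j + m) ≤ C)
    (μ : ProbabilityMeasure U) (ν : ProbabilityMeasure V) :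
    Summable (fun j => |qT q i (j + m) μ ν| * W (j + m)) ∧
      ∑' j, |qT q i (j + m) μ ν| * W (j + m) ≤ C := by
  have hW : ∀ j, 0 ≤ W j := fun j => (hA1.W_pos j).le
  have hcont : ∀ j, Continuous fun p : U × V => q i (j + m) p.1 p.2 * W (j + m) :=
    fun j => (hA2.q_cont i _).mul continuous_const
  have habs : ∀ j (p : U × V), |q i (j + m) p.1 p.2 * W (j + m)| =
      |q i (j + m) p.1 p.2| * W (j + m) := fun j p => by rw [abs_mul, abs_of_nonneg (hW _)]
  have hqT : ∀ j, |qT q i (j + m) μ ν| * W (j + m) =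
      |∫ p, q i (j + m) p.1 p.2 * W (j + m) ∂(μ : Measure U).prod ν| := fun j => by
    rw [integral_mul_const, abs_mul, abs_of_nonneg (hW _), qT,
      integral_integral_eq_integral_prod_of_continuous _ _ (hA2.q_cont i _)]
  simp_rw [hqT]
  refine summable_abs_integral_and_tsum_le
    (fun j => (hcont j).integrable_of_hasCompactSupport (.of_compactSpace _))
    (fun p => ?_) (fun p => ?_)
  · simp_rw [habs]
    exact (summable_nat_add_iff m).2 (hasSum_abs_q_mul_W hrate hA1 i p.1 p.2).summable
  · simp_rw [habs]
    exact hC p.1 p.2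

theorem exists_tsum_abs_qT_mul_W_le (hrate : RateHyps q qb) (hA1 : A1Hyps q qb N w c W)
    (hA2 : A2Hyps q r W M) (i : ℕ) :
    ∃ C, ∀ μ ν, ∑' j, |qT q i j μ ν| * W j ≤ C := by
  obtain ⟨C, hC⟩ := (isCompact_range (continuous_tsum_abs_q_mul_W hrate hA1 hA2 i)).bddAbove
  refine ⟨C, fun μ ν => ?_⟩
  simpa using (summable_abs_qT_mul_W_nat_add_and_tsum_le hrate hA1 hA2 (m := 0)
    (fun a b => by simpa using hC ⟨(a, b), rfl⟩) μ ν).2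

theorem summable_abs_qT_mul_W (hrate : RateHyps q qb) (hA1 : A1Hyps q qb N w c W)
    (hA2 : A2Hyps q r W M) (i : ℕ) (μ : ProbabilityMeasure U) (ν : ProbabilityMeasure V) :
    Summable fun j => |qT q i j μ ν| * W j := by
  obtain ⟨m, hm⟩ := exists_forall_tsum_abs_q_mul_W_nat_add_le hrate hA1 hA2 i one_pos
  exact (summable_nat_add_iff m).1
    (summable_abs_qT_mul_W_nat_add_and_tsum_le hrate hA1 hA2 hm μ ν).1

variable {B : ℝ} {φ : ℕ → ℕ → ℝ} {φ₀ : ℕ → ℝ}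

theorem tsum_pT_mul_of_abs_le (hrate : RateHyps q qb) (hA1 : A1Hyps q qb N w c W)
    (hA2 : A2Hyps q r W M) {i : ℕ} {μ : ProbabilityMeasure U} {ν : ProbabilityMeasure V}
    {ψ : ℕ → ℝ} (hψ : ∀ j, |ψ j| ≤ B * W j) :
    ∑' j, pT q qb i j μ ν * ψ j = (∑' j, qT q i j μ ν * ψ j) / (qb i + 1) + ψ i :=
  tsum_pT_mul (summable_abs_mul_of_abs_le (summable_abs_qT_mul_W hrate hA1 hA2 i μ ν) hψ).of_abs

theorem abs_tsum_pT_mul_le (hrate : RateHyps q qb) (hA1 : A1Hyps q qb N w c W)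
    (hA2 : A2Hyps q r W M) {i : ℕ} {C : ℝ} (hC : ∀ μ ν, ∑' j, |qT q i j μ ν| * W j ≤ C)
    (hB : 0 ≤ B) {ψ : ℕ → ℝ} (hψ : ∀ j, |ψ j| ≤ B * W j) (μ : ProbabilityMeasure U)
    (ν : ProbabilityMeasure V) :
    |∑' j, pT q qb i j μ ν * ψ j| ≤ B * C / |qb i + 1| + B * W i := by
  have hS : |∑' j, qT q i j μ ν * ψ j| ≤ B * C := by
    have h := abs_tsum_mul_le_of_abs_le (summable_abs_qT_mul_W hrate hA1 hA2 i μ ν) hψ 0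
    simp only [Finset.range_zero, Finset.sum_empty, zero_add, add_zero] at h
    exact h.trans (mul_le_mul_of_nonneg_left (hC μ ν) hB)
  rw [tsum_pT_mul_of_abs_le hrate hA1 hA2 hψ]
  calc _ ≤ |∑' j, qT q i j μ ν * ψ j| / |qb i + 1| + |ψ i| := by
        rw [← abs_div]; exact abs_add_le _ _
    _ ≤ B * C / |qb i + 1| + B * W i := by gcongr; exact hψ i

theorem tendstoUniformly_tsum_pT_mul (hrate : RateHyps q qb) (hA1 : A1Hyps q qb N w c W)
    (hA2 : A2Hyps q r W M) (i : ℕ) (hB : 0 ≤ B) (hφ : ∀ n j, |φ n j| ≤ B * W j)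
    (hφ₀ : ∀ j, |φ₀ j| ≤ B * W j) (hlim : ∀ j, Tendsto (fun n => φ n j) atTop (𝓝 (φ₀ j))) :
    TendstoUniformly
      (fun n (t : ProbabilityMeasure U × ProbabilityMeasure V) =>
        ∑' j, pT q qb i j t.1 t.2 * φ n j)
      (fun t => ∑' j, pT q qb i j t.1 t.2 * φ₀ j) atTop := by
  choose K hK using fun j => (isCompact_range (hA2.q_cont i j).abs).bddAbove
  have hqK : ∀ (t : ProbabilityMeasure U × ProbabilityMeasure V) j, |qT q i j t.1 t.2| ≤ K j :=
    fun t j => abs_integral_integral_le fun a b => hK j ⟨(a, b), rfl⟩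
  have htail : ∀ ε > 0, ∃ m, ∀ t : ProbabilityMeasure U × ProbabilityMeasure V,
      ∑' j, |qT q i (j + m) t.1 t.2| * W (j + m) ≤ ε := fun ε hε => by
    obtain ⟨m, hm⟩ := exists_forall_tsum_abs_q_mul_W_nat_add_le hrate hA1 hA2 i hε
    exact ⟨m, fun t => (summable_abs_qT_mul_W_nat_add_and_tsum_le hrate hA1 hA2 hm t.1 t.2).2⟩
  have hS := tendstoUniformly_tsum_mul hB hqK
    (fun t => summable_abs_qT_mul_W hrate hA1 hA2 i t.1 t.2) htail hφ hφ₀ hlim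
  simp_rw [tsum_pT_mul_of_abs_le hrate hA1 hA2 (hφ _), tsum_pT_mul_of_abs_le hrate hA1 hA2 hφ₀]
  exact ((uniformContinuous_div_const' (qb i + 1)).comp_tendstoUniformly hS).add
    (hlim i).tendstoUniformly_const

theorem tendsto_Iop [Nonempty U] [Nonempty V] (hrate : RateHyps q qb)
    (hA1 : A1Hyps q qb N w c W) (hA2 : A2Hyps q r W M) (α : ℝ) (i : ℕ) (hB : 0 ≤ B)
    (hφ : ∀ n j, |φ n j| ≤ B * W j) (hφ₀ : ∀ j, |φ₀ j| ≤ B * W j)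
    (hlim : ∀ j, Tendsto (fun n => φ n j) atTop (𝓝 (φ₀ j))) :
    Tendsto (fun n => Iop q r qb α (φ n) i) atTop (𝓝 (Iop q r qb α φ₀ i)) := by
  have : Nonempty (ProbabilityMeasure U) := ⟨⟨.dirac (Classical.arbitrary U), inferInstance⟩⟩
  have : Nonempty (ProbabilityMeasure V) := ⟨⟨.dirac (Classical.arbitrary V), inferInstance⟩⟩
  set d := α + qb i + 1
  set k := (qb i + 1) / d
  obtain ⟨C, hC⟩ := exists_tsum_abs_qT_mul_W_le hrate hA1 hA2 i
  have hbound : ∀ t : ProbabilityMeasure U × ProbabilityMeasure V,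
      |rT r i t.1 t.2 / d + k * ∑' j, pT q qb i j t.1 t.2 * φ₀ j| ≤
        M * W i / |d| + |k| * (B * C / |qb i + 1| + B * W i) := fun t => by
    have hr : |rT r i t.1 t.2| ≤ M * W i := abs_integral_integral_le fun a b =>
      (abs_of_nonneg (hA2.r_nonneg i a b)).trans_le (hA2.r_le i a b)
    calc _ ≤ |rT r i t.1 t.2| / |d| + |k| * |∑' j, pT q qb i j t.1 t.2 * φ₀ j| := by
          rw [← abs_div, ← abs_mul]; exact abs_add_le _ _
      _ ≤ _ := by
          gcongr
          exact abs_tsum_pT_mul_le hrate hA1 hA2 hC hB hφ₀ t.1 t.2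
  exact (tendsto_iInf_iSup_of_tendstoUniformly hbound
    ((tendstoUniformly_tsum_pT_mul hrate hA1 hA2 i hB hφ hφ₀ hlim).add_const_mul
      (fun t => rT r i t.1 t.2 / d) k) :)

end Model

theorem Tmap_mem_Icc {U V : Type} [MeasurableSpace U] [MeasurableSpace V]
    {q : ℕ → ℕ → U → V → ℝ} {r : ℕ → U → V → ℝ} {qb : ℕ → ℝ} {α : ℝ} {ψ₁ ψ₂ : ℕ → ℝ}
    {i : ℕ} (h : ψ₂ i ≤ ψ₁ i) (φ : ℕ → ℝ) :
    Tmap q r qb α ψ₁ ψ₂ φ i ∈ Set.Icc (ψ₂ i) (ψ₁ i) :=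
  ⟨le_min (le_max_right _ _) h, min_le_right _ _⟩

theorem PsiHyps.abs_le_of_mem_Icc {ψ₁ ψ₂ W : ℕ → ℝ} {M : ℝ} (hψ : PsiHyps ψ₁ ψ₂ W M)
    {j : ℕ} {x : ℝ} (hx : x ∈ Set.Icc (ψ₂ j) (ψ₁ j)) : |x| ≤ M * W j :=
  abs_le.2 ⟨by linarith [hψ.ψ₂_nonneg j, hψ.ψ₁_le j, hx.1, hx.2], hx.2.trans (hψ.ψ₁_le j)⟩

theorem stmt16_general {U V : Type} [MetricSpace U] [CompactSpace U] [Nonempty U]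
    [MeasurableSpace U] [BorelSpace U]
    [MetricSpace V] [CompactSpace V] [Nonempty V]
    [MeasurableSpace V] [BorelSpace V]
    (q : ℕ → ℕ → U → V → ℝ) (r : ℕ → U → V → ℝ) (qb : ℕ → ℝ)
    (N : ℕ) (w : ℕ → ℕ → ℝ) (c : ℝ) (W : ℕ → ℝ) (M : ℝ) (α : ℝ) (ψ₁ ψ₂ : ℕ → ℝ)
    (hrate : RateHyps q qb) (hA1 : A1Hyps q qb N w c W)
    (hA2 : A2Hyps q r W M) (hψ : PsiHyps ψ₁ ψ₂ W M) :
    ∀ u : ℕ → ℕ → ℝ, u 0 = ψ₂ → (∀ n, u (n + 1) = Tmap q r qb α ψ₁ ψ₂ (u n)) →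
      ∀ ustar : ℕ → ℝ, (∀ i, Tendsto (fun n => u n i) atTop (𝓝 (ustar i))) →
        ∀ i : ℕ, Tmap q r qb α ψ₁ ψ₂ ustar i ≤ ustar i := by
  intro u hu0 hurec ustar hu i
  have hψ₂₁ : ∀ j, ψ₂ j ≤ ψ₁ j := fun j => (hψ.ψ₂_lt_ψ₁ j).le
  have hu_mem : ∀ n j, u n j ∈ Set.Icc (ψ₂ j) (ψ₁ j)
    | 0, j => by rw [hu0]; exact ⟨le_rfl, hψ₂₁ j⟩
    | n + 1, j => by rw [hurec n]; exact Tmap_mem_Icc (hψ₂₁ j) (u n)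
  have hustar_mem : ∀ j, ustar j ∈ Set.Icc (ψ₂ j) (ψ₁ j) := fun j =>
    isClosed_Icc.mem_of_tendsto (hu j) (Eventually.of_forall fun n => hu_mem n j)
  have hM : 0 ≤ M := (pos_of_mul_pos_left ((hψ.ψ₂_nonneg 0).trans_lt
    ((hψ.ψ₂_lt_ψ₁ 0).trans_le (hψ.ψ₁_le 0))) (hA1.W_pos 0).le).le
  have hIop := tendsto_Iop hrate hA1 hA2 α i hM (fun n j => hψ.abs_le_of_mem_Icc (hu_mem n j))
    (fun j => hψ.abs_le_of_mem_Icc (hustar_mem j)) hu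
  have hT : Tendsto (fun n => u (n + 1) i) atTop (𝓝 (Tmap q r qb α ψ₁ ψ₂ ustar i)) := by
    simp_rw [hurec]
    exact (hIop.max tendsto_const_nhds).min tendsto_const_nhds
  exact (tendsto_nhds_unique hT ((hu i).comp (tendsto_add_atTop_nat 1))).le

/-- The pointwise limit `u*` of the iterates satisfies `u* ≥ T u*`. -/
theorem stmt16 {U V : Type} [MetricSpace U] [CompactSpace U] [Nonempty U]
    [MeasurableSpace U] [BorelSpace U]
    [MetricSpace V] [CompactSpace V] [Nonempty V]
    [MeasurableSpace V] [BorelSpace V]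
    (q : ℕ → ℕ → U → V → ℝ) (r : ℕ → U → V → ℝ) (qb : ℕ → ℝ)
    (N : ℕ) (w : ℕ → ℕ → ℝ) (c : ℝ) (W : ℕ → ℝ) (M : ℝ) (α : ℝ) (ψ₁ ψ₂ : ℕ → ℝ)
    (hrate : RateHyps q qb) (hA1 : A1Hyps q qb N w c W)
    (hA2 : A2Hyps q r W M) (hψ : PsiHyps ψ₁ ψ₂ W M) (hα : 0 < α) :
    ∀ u : ℕ → ℕ → ℝ, u 0 = ψ₂ → (∀ n, u (n + 1) = Tmap q r qb α ψ₁ ψ₂ (u n)) →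
      ∀ ustar : ℕ → ℝ, (∀ i, Tendsto (fun n => u n i) atTop (𝓝 (ustar i))) →
        ∀ i : ℕ, Tmap q r qb α ψ₁ ψ₂ ustar i ≤ ustar i :=
  stmt16_general q r qb N w c W M α ψ₁ ψ₂ hrate hA1 hA2 hψ
end
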